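/- arXiv:1802.06485 — 4 statements merged into one kernel-verified Lean document; each statement's English description precedes it below -/
import Mathlib

section
/- Let f : ℝ^p → ℝ be differentiable, m-strongly convex and M-smooth. Then for all x, y ∈ ℝ^p, ⟨∇f(x) - ∇f(y), x - y⟩ ≥ (mM/(m+M))‖x-y‖² + (1/(m+M))‖∇f(x) - ∇f(y)‖². -/
open RealInnerProductSpace

lemma stmt0_arith (m M s D U W : ℝ) (hm : 0 < m) (hmM : m ≤ M) (hW : 0 ≤ W)
    (hwsq : W = U - 2 * m * s + m ^ 2 * D)
    (key : ∀ t : ℝ, s - m * D ≥ (2 * t - (M - m) * t ^ 2) * W) :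
    s ≥ m * M / (m + M) * D + 1 / (m + M) * U := by
  have hmM0 : 0 < m + M := by linarith
  rw [ge_iff_le, div_mul_eq_mul_div, div_mul_eq_mul_div, ← add_div, div_le_iff₀ hmM0]
  rcases eq_or_lt_of_le hmM with h | h
  · -- m = M
    have hW0 : W = 0 := by
      rcases eq_or_lt_of_le hW with h0 | h0
      · exact h0.symm
      · exfalso
        have hk := key ((s - m * D) / (2 * W) + 1)
        rw [← h, show (m - m) = 0 by ring] at hk
        have h2W : (2 * W) ≠ 0 := by positivity
        have : (2 * ((s - m * D) / (2 * W) + 1) - 0 * ((s - m * D) / (2 * W) + 1) ^ 2) * W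
            = (s - m * D) + 2 * W := by field_simp; ring
        rw [this] at hk
        linarith
    have hk0 := key 0
    nlinarith [hk0, hwsq, hW0]
  · have hMm : 0 < M - m := by linarith
    have hk := key (1 / (M - m))
    have ht : 2 * (1 / (M - m)) - (M - m) * (1 / (M - m)) ^ 2 = 1 / (M - m) := by
      field_simp; ring
    rw [ht, ge_iff_le] at hk
    rw [div_mul_eq_mul_div, div_le_iff₀ hMm] at hk
    nlinarith [hk, hwsq]

theorem stmt_0 {p : ℕ} (f : EuclideanSpace ℝ (Fin p) → ℝ) (m M : ℝ)
    (hm : 0 < m) (hmM : m ≤ M)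
    (hdiff : Differentiable ℝ f)
    (hsc : ∀ x y, f y ≥ f x + ⟪gradient f x, y - x⟫ + m / 2 * ‖y - x‖ ^ 2)
    (hsm : ∀ x y, f y ≤ f x + ⟪gradient f x, y - x⟫ + M / 2 * ‖y - x‖ ^ 2) :
    ∀ x y, ⟪gradient f x - gradient f y, x - y⟫ ≥
      m * M / (m + M) * ‖x - y‖ ^ 2 +
        1 / (m + M) * ‖gradient f x - gradient f y‖ ^ 2 := by
  intro x y
  set a := gradient f x with ha
  set b := gradient f y with hb
  set w : EuclideanSpace ℝ (Fin p) := (a - b) - m • (x - y) with hwdef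
  have key : ∀ t : ℝ, ⟪a - b, x - y⟫ - m * ‖x - y‖ ^ 2 ≥
      (2 * t - (M - m) * t ^ 2) * ‖w‖ ^ 2 := by
    intro t
    have h1 := hsc x (y + t • w)
    have h2 := hsm y (y + t • w)
    have h3 := hsc y (x - t • w)
    have h4 := hsm x (x - t • w)
    rw [← ha, ← hb] at *
    simp only [← real_inner_self_eq_norm_sq, hwdef] at h1 h2 h3 h4 ⊢
    simp only [inner_add_left, inner_add_right, inner_sub_left, inner_sub_right,
      real_inner_smul_left, real_inner_smul_right] at h1 h2 h3 h4 ⊢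
    simp only [real_inner_comm b a, real_inner_comm x a, real_inner_comm y a,
      real_inner_comm x b, real_inner_comm y b, real_inner_comm y x,
      real_inner_comm w a, real_inner_comm w b, real_inner_comm w x, real_inner_comm w y] at h1 h2 h3 h4 ⊢
    ring_nf at h1 h2 h3 h4 ⊢
    linarith [h1, h2, h3, h4]
  have hwsq : ‖w‖ ^ 2 = ‖a - b‖ ^ 2 - 2 * m * ⟪a - b, x - y⟫ + m ^ 2 * ‖x - y‖ ^ 2 := by
    rw [hwdef, norm_sub_sq_real, real_inner_smul_right, norm_smul]
    simp [mul_pow]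
    ring
  exact stmt0_arith m M _ _ _ _ hm hmM (sq_nonneg _) hwsq key
end

section
/- Let R : ℝ^p → ℝ be τ_ℓ-strongly convex and τ_u-smooth with minimizer θ* over a closed convex set Θ (satisfying ∇R(θ*) = 0, with θ* ∈ Θ). Set η = 2/(τ_ℓ + τ_u). If for each t the gradient estimate g_t satisfies ‖g_t - ∇R(θ^t)‖ ≤ α‖θ^t - θ*‖ + β with α < τ_ℓ, then the iterates θ^{t+1} = P_Θ(θ^t - η g_t) satisfy ‖θ^t - θ*‖ ≤ κ^t ‖θ^0 - θ*‖ + ηβ/(1-κ), where κ = √(1 - 2η τ_ℓ τ_u/(τ_ℓ+τ_u)) + ηα < 1. -/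
set_option maxHeartbeats 1000000

open RealInnerProductSpace

private lemma aux_breg {p : ℕ} (R : EuclideanSpace ℝ (Fin p) → ℝ)
    (G : EuclideanSpace ℝ (Fin p) → EuclideanSpace ℝ (Fin p)) (τℓ τu : ℝ) (hL : τℓ < τu)
    (hsc : ∀ θ₁ θ₂, τℓ / 2 * ‖θ₁ - θ₂‖ ^ 2 ≤ R θ₁ - R θ₂ - ⟪G θ₂, θ₁ - θ₂⟫)
    (hsm : ∀ θ₁ θ₂, R θ₁ - R θ₂ - ⟪G θ₂, θ₁ - θ₂⟫ ≤ τu / 2 * ‖θ₁ - θ₂‖ ^ 2)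
    (x y : EuclideanSpace ℝ (Fin p)) :
    ‖G y - G x - τℓ • (y - x)‖ ^ 2 ≤
      2 * (τu - τℓ) * (R y - R x - ⟪G x, y - x⟫ - τℓ / 2 * ‖y - x‖ ^ 2) := by
  set L : ℝ := τu - τℓ with hLdef
  have hL0 : 0 < L := by rw [hLdef]; linarith
  set c : ℝ := 1 / L with hc
  set d : EuclideanSpace ℝ (Fin p) := G y - G x - τℓ • (y - x) with hd
  set z : EuclideanSpace ℝ (Fin p) := y - c • d with hz
  have h1 := hsc z x
  have h2 := hsm z y
  have hzx : z - x = (y - x) - c • d := by rw [hz]; abel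
  have hzy : z - y = -(c • d) := by rw [hz]; abel
  set N : ℝ := ‖y - x‖ ^ 2 with hN
  set D : ℝ := ‖d‖ ^ 2 with hD
  set P : ℝ := ⟪y - x, d⟫ with hP
  have e1 : ‖z - x‖ ^ 2 = N - 2 * (c * P) + c ^ 2 * D := by
    rw [hzx, norm_sub_sq_real, real_inner_smul_right, norm_smul, mul_pow,
      Real.norm_eq_abs, sq_abs]
  have e2 : ‖z - y‖ ^ 2 = c ^ 2 * D := by
    rw [hzy, norm_neg, norm_smul, mul_pow, Real.norm_eq_abs, sq_abs]
  have e3 : ⟪G x, z - x⟫ = ⟪G x, y - x⟫ - c * ⟪G x, d⟫ := by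
    rw [hzx, inner_sub_right, real_inner_smul_right]
  have e4 : ⟪G y, z - y⟫ = -(c * ⟪G y, d⟫) := by
    rw [hzy, inner_neg_right, real_inner_smul_right]
  have h6 : G y - G x = d + τℓ • (y - x) := by rw [hd]; abel
  have e5 : ⟪G y, d⟫ - ⟪G x, d⟫ = D + τℓ * P := by
    calc ⟪G y, d⟫ - ⟪G x, d⟫ = ⟪G y - G x, d⟫ := (inner_sub_left _ _ _).symm
      _ = ⟪d, d⟫ + τℓ * ⟪y - x, d⟫ := by rw [h6, inner_add_left, real_inner_smul_left]
      _ = D + τℓ * P := by rw [hD, hP, real_inner_self_eq_norm_sq]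
  rw [e1, e3] at h1
  rw [e2, e4] at h2
  have e5c : c * ⟪G y, d⟫ - c * ⟪G x, d⟫ = c * D + τℓ * (c * P) := by
    linear_combination c * e5
  have key : c * D - L / 2 * (c ^ 2 * D) ≤ R y - R x - ⟪G x, y - x⟫ - τℓ / 2 * N := by
    linarith [h1, h2, e5c]
  have hid : 2 * L * (c * D - L / 2 * (c ^ 2 * D)) = D := by
    rw [hc]; field_simp; try ring
  have hmul := mul_le_mul_of_nonneg_left key (by linarith : (0:ℝ) ≤ 2 * L)
  linarith [hmul, hid]

private lemma aux_coco {p : ℕ} (R : EuclideanSpace ℝ (Fin p) → ℝ)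
    (G : EuclideanSpace ℝ (Fin p) → EuclideanSpace ℝ (Fin p)) (τℓ τu : ℝ) (hτℓ : 0 < τℓ)
    (hττ : τℓ ≤ τu)
    (hsc : ∀ θ₁ θ₂, τℓ / 2 * ‖θ₁ - θ₂‖ ^ 2 ≤ R θ₁ - R θ₂ - ⟪G θ₂, θ₁ - θ₂⟫)
    (hsm : ∀ θ₁ θ₂, R θ₁ - R θ₂ - ⟪G θ₂, θ₁ - θ₂⟫ ≤ τu / 2 * ‖θ₁ - θ₂‖ ^ 2)
    (x y : EuclideanSpace ℝ (Fin p)) :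
    ‖G x - G y‖ ^ 2 + τℓ * τu * ‖x - y‖ ^ 2 ≤ (τℓ + τu) * ⟪G x - G y, x - y⟫ := by
  set S : ℝ := ⟪G x - G y, x - y⟫ with hS
  set N : ℝ := ‖x - y‖ ^ 2 with hN
  have hexp : ‖G x - G y - τℓ • (x - y)‖ ^ 2 = ‖G x - G y‖ ^ 2 - 2 * (τℓ * S) + τℓ ^ 2 * N := by
    rw [norm_sub_sq_real, real_inner_smul_right, norm_smul, mul_pow, Real.norm_eq_abs,
      sq_abs, hS, hN]
  rcases eq_or_lt_of_le hττ with heq | hlt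
  · -- τℓ = τu : R is exactly quadratic, gradient difference is exactly τℓ • (x - y)
    have hquad : ∀ z w, R z - R w - ⟪G w, z - w⟫ = τℓ / 2 * ‖z - w‖ ^ 2 := fun z w =>
      le_antisymm (by have := hsm z w; rw [← heq] at this; exact this) (hsc z w)
    set d : EuclideanSpace ℝ (Fin p) := G x - G y - τℓ • (x - y) with hd
    have hdz : d = 0 := by
      have e1 := hquad (x + d) x
      have e2 := hquad (x + d) y
      have e3 := hquad x y
      have hx1 : x + d - x = d := by abel
      have hx2 : x + d - y = (x - y) + d := by abel
      rw [hx1] at e1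
      rw [hx2] at e2
      have hn2 : ‖(x - y) + d‖ ^ 2 = ‖x - y‖ ^ 2 + 2 * ⟪x - y, d⟫ + ‖d‖ ^ 2 := by
        rw [@norm_add_sq_real]
      have hi2 : ⟪G y, (x - y) + d⟫ = ⟪G y, x - y⟫ + ⟪G y, d⟫ := by rw [inner_add_right]
      rw [hn2, hi2] at e2
      have hcalc : ⟪d, d⟫ = ⟪G x, d⟫ - ⟪G y, d⟫ - τℓ * ⟪x - y, d⟫ := by
        nth_rewrite 1 [hd]
        rw [inner_sub_left, inner_sub_left, real_inner_smul_left]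
      have hdd : ⟪d, d⟫ = 0 := by
        rw [real_inner_self_eq_norm_sq] at hcalc
        rw [real_inner_self_eq_norm_sq]
        linarith [e1, e2, e3, hcalc]
      exact inner_self_eq_zero.mp hdd
    have hGxy : G x - G y = τℓ • (x - y) := by
      have := sub_eq_zero.mp hdz
      exact this
    have hS' : S = τℓ * N := by
      rw [hS, hGxy, real_inner_smul_left, hN, real_inner_self_eq_norm_sq]
    have hG2 : ‖G x - G y‖ ^ 2 = τℓ ^ 2 * N := by
      rw [hGxy, norm_smul, mul_pow, Real.norm_eq_abs, sq_abs, hN]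
    rw [hG2, hS', ← heq]
    exact le_of_eq (by ring)
  · have h1 := aux_breg R G τℓ τu hlt hsc hsm x y
    have h2 := aux_breg R G τℓ τu hlt hsc hsm y x
    have hneg : G y - G x - τℓ • (y - x) = -(G x - G y - τℓ • (x - y)) := by
      rw [smul_sub, smul_sub]; abel
    rw [hneg, norm_neg] at h1
    rw [hexp] at h1 h2
    have hrev : ‖y - x‖ = ‖x - y‖ := norm_sub_rev y x
    rw [hrev] at h1
    have hip1 : ⟪G x, y - x⟫ = -⟪G x, x - y⟫ := by
      rw [← inner_neg_right]; congr 1; abel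
    have hip2 : ⟪G y, x - y⟫ = -⟪G y, y - x⟫ := by
      rw [← inner_neg_right]; congr 1; abel
    rw [hip1] at h1
    have hsum1 : ⟪G x, x - y⟫ - ⟪G y, x - y⟫ = S := by
      rw [hS, inner_sub_left]
    have hGx : (⟪G x, x - y⟫ : ℝ) = S + ⟪G y, x - y⟫ := by linarith [hsum1]
    rw [hGx] at h1
    rw [← hN] at h1 h2
    linarith [h1, h2]

theorem stmt_3 {p : ℕ} (R : EuclideanSpace ℝ (Fin p) → ℝ)
    (Θ : Set (EuclideanSpace ℝ (Fin p))) (hΘclosed : IsClosed Θ) (hΘconv : Convex ℝ Θ)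
    (proj : EuclideanSpace ℝ (Fin p) → EuclideanSpace ℝ (Fin p))
    (hproj : ∀ u, proj u ∈ Θ ∧ ∀ v ∈ Θ, ‖u - proj u‖ ≤ ‖u - v‖)
    (τℓ τu : ℝ) (hτℓ : 0 < τℓ) (hττ : τℓ ≤ τu)
    (hR : Differentiable ℝ R)
    (hsc : ∀ θ₁ θ₂, τℓ / 2 * ‖θ₁ - θ₂‖ ^ 2 ≤
      R θ₁ - R θ₂ - ⟪gradient R θ₂, θ₁ - θ₂⟫)
    (hsm : ∀ θ₁ θ₂, R θ₁ - R θ₂ - ⟪gradient R θ₂, θ₁ - θ₂⟫ ≤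
      τu / 2 * ‖θ₁ - θ₂‖ ^ 2)
    (θstar : EuclideanSpace ℝ (Fin p)) (hθstar : θstar ∈ Θ)
    (hmin : gradient R θstar = 0)
    (η : ℝ) (hη : η = 2 / (τℓ + τu))
    (α β : ℝ) (hα0 : 0 ≤ α) (hβ0 : 0 ≤ β) (hα : α < τℓ)
    (g : ℕ → EuclideanSpace ℝ (Fin p)) (θ : ℕ → EuclideanSpace ℝ (Fin p))
    (hupd : ∀ t, θ (t + 1) = proj (θ t - η • g t))
    (hg : ∀ t, ‖g t - gradient R (θ t)‖ ≤ α * ‖θ t - θstar‖ + β)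
    (κ : ℝ) (hκ : κ = Real.sqrt (1 - 2 * η * τℓ * τu / (τℓ + τu)) + η * α) :
    κ < 1 ∧ ∀ t, ‖θ t - θstar‖ ≤ κ ^ t * ‖θ 0 - θstar‖ + η * β / (1 - κ) := by
  have hsumpos : 0 < τℓ + τu := by linarith
  have hη0 : 0 < η := by rw [hη]; positivity
  set G := gradient R with hG
  set ρ : ℝ := (τu - τℓ) / (τℓ + τu) with hρdef
  have hρ0 : 0 ≤ ρ := by
    rw [hρdef]; exact div_nonneg (by linarith) (by linarith)
  have hsqrt : Real.sqrt (1 - 2 * η * τℓ * τu / (τℓ + τu)) = ρ := by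
    have h1 : 1 - 2 * η * τℓ * τu / (τℓ + τu) = ρ ^ 2 := by
      rw [hη, hρdef]; field_simp; try ring
    rw [h1, Real.sqrt_sq hρ0]
  have hκρ : κ = ρ + η * α := by rw [hκ, hsqrt]
  have hκ0 : 0 ≤ κ := by rw [hκρ]; positivity
  have hκ1 : κ < 1 := by
    have hcfrac : κ = (τu - τℓ + 2 * α) / (τℓ + τu) := by
      rw [hκρ, hρdef, hη]; field_simp; try ring
    rw [hcfrac, div_lt_one hsumpos]; linarith
  refine ⟨hκ1, ?_⟩
  -- contraction of the exact gradient step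
  have hcontr : ∀ x : EuclideanSpace ℝ (Fin p),
      ‖(x - η • G x) - θstar‖ ≤ ρ * ‖x - θstar‖ := by
    intro x
    have hcoco := aux_coco R G τℓ τu hτℓ hττ hsc hsm x θstar
    rw [hmin, sub_zero] at hcoco
    set Δ : EuclideanSpace ℝ (Fin p) := x - θstar with hΔ
    set S : ℝ := ⟪G x, Δ⟫ with hSdef
    have hrw : (x - η • G x) - θstar = Δ - η • G x := by rw [hΔ]; abel
    rw [hrw]
    have hexp : ‖Δ - η • G x‖ ^ 2 = ‖Δ‖ ^ 2 - 2 * (η * S) + η ^ 2 * ‖G x‖ ^ 2 := by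
      rw [norm_sub_sq_real, real_inner_smul_right, norm_smul, mul_pow, Real.norm_eq_abs,
        sq_abs, hSdef, real_inner_comm (G x) Δ]
    have hηs : η * (τℓ + τu) = 2 := by rw [hη]; field_simp
    have hρ2 : ρ ^ 2 = 1 - η ^ 2 * (τℓ * τu) := by
      rw [hρdef, hη]; field_simp; try ring
    have hsq : ‖Δ - η • G x‖ ^ 2 ≤ (ρ * ‖Δ‖) ^ 2 := by
      have hmul := mul_le_mul_of_nonneg_left hcoco (sq_nonneg η)
      have hid : η ^ 2 * ((τℓ + τu) * S) = 2 * (η * S) := by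
        linear_combination η * S * hηs
      rw [hexp, mul_pow, hρ2]
      nlinarith [hmul, hid]
    have := Real.sqrt_le_sqrt hsq
    rwa [Real.sqrt_sq (norm_nonneg _), Real.sqrt_sq (by positivity)] at this
  -- projection does not increase distance to θstar
  have hprojstar : ∀ u, ‖proj u - θstar‖ ≤ ‖u - θstar‖ := by
    intro u
    obtain ⟨hmem, hbest⟩ := hproj u
    haveI : Nonempty Θ := ⟨⟨θstar, hθstar⟩⟩
    have hinf : ‖u - proj u‖ = ⨅ w : Θ, ‖u - w‖ := by
      apply le_antisymm
      · exact le_ciInf fun w => hbest w w.2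
      · have hbdd : BddBelow
            (Set.range fun w : Θ => ‖u - (w : EuclideanSpace ℝ (Fin p))‖) :=
          ⟨0, fun x hx => by obtain ⟨w, rfl⟩ := hx; positivity⟩
        exact ciInf_le hbdd ⟨proj u, hmem⟩
    have hvar := (norm_eq_iInf_iff_real_inner_le_zero hΘconv hmem).1 hinf θstar hθstar
    have hdecomp : u - θstar = (u - proj u) + (proj u - θstar) := by abel
    have hsq : ‖proj u - θstar‖ ^ 2 ≤ ‖u - θstar‖ ^ 2 := by
      rw [hdecomp, @norm_add_sq_real]
      have hflip : ⟪u - proj u, proj u - θstar⟫ = -⟪u - proj u, θstar - proj u⟫ := by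
        rw [← inner_neg_right]; congr 1; abel
      nlinarith [hvar, sq_nonneg ‖u - proj u‖, hflip]
    have := Real.sqrt_le_sqrt hsq
    rwa [Real.sqrt_sq (norm_nonneg _), Real.sqrt_sq (norm_nonneg _)] at this
  -- one-step recursion
  have hstep : ∀ t, ‖θ (t + 1) - θstar‖ ≤ κ * ‖θ t - θstar‖ + η * β := by
    intro t
    rw [hupd t]
    calc ‖proj (θ t - η • g t) - θstar‖ ≤ ‖(θ t - η • g t) - θstar‖ := hprojstar _
      _ ≤ ‖(θ t - η • G (θ t)) - θstar‖ + ‖η • (g t - G (θ t))‖ := by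
          have hre : (θ t - η • g t) - θstar =
              ((θ t - η • G (θ t)) - θstar) - η • (g t - G (θ t)) := by
            rw [smul_sub]; abel
          rw [hre]
          exact norm_sub_le _ _
      _ ≤ ρ * ‖θ t - θstar‖ + η * (α * ‖θ t - θstar‖ + β) := by
          have h1 := hcontr (θ t)
          have h2 : ‖η • (g t - G (θ t))‖ = η * ‖g t - G (θ t)‖ := by
            rw [norm_smul, Real.norm_eq_abs, abs_of_pos hη0]
          rw [h2]
          have h3 := mul_le_mul_of_nonneg_left (hg t) hη0.le
          linarith
      _ = κ * ‖θ t - θstar‖ + η * β := by rw [hκρ]; ring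
  -- induction
  intro t
  set C : ℝ := η * β / (1 - κ) with hC
  have h1κ : 0 < 1 - κ := by linarith
  have hCeq : κ * C + η * β = C := by
    rw [hC]; field_simp; try ring
  induction t with
  | zero =>
    have hC0 : 0 ≤ C := by rw [hC]; positivity
    simp
    linarith [hC0]
  | succ t ih =>
    calc ‖θ (t + 1) - θstar‖ ≤ κ * ‖θ t - θstar‖ + η * β := hstep t
      _ ≤ κ * (κ ^ t * ‖θ 0 - θstar‖ + C) + η * β :=
          by nlinarith [mul_le_mul_of_nonneg_left ih hκ0]
      _ = κ ^ (t + 1) * ‖θ 0 - θstar‖ + (κ * C + η * β) := by ring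
      _ = κ ^ (t + 1) * ‖θ 0 - θstar‖ + C := by rw [hCeq]
end

section
/- Let X be a real random variable with E[X⁴] < ∞, mean μ = E[X], variance σ², and suppose E[(X-μ)⁴] ≤ C₄σ⁴. Let A be an event with P(A) = 1 - γ ≥ 1/2. Then |E[X | A] - E[X]| ≤ σ (8 C₄ γ³)^{1/4}. -/
/-! With `Y = X - E[X]`, the integrals of `Y` over `A` and over `Aᶜ` cancel. Jensen's inequality
for `t ↦ t⁴` bounds the fourth power of each of them by `P(A)³ ∫_A Y⁴`, resp. `γ³ ∫_{Aᶜ} Y⁴`.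
Weighting these two bounds by `γ³` and `P(A)³` and adding gives
`(∫_A Y)⁴ (P(A)³ + γ³) ≤ P(A)³ γ³ E[Y⁴]`, and `P(A)³ + γ³ ≥ 1/4`, `P(A) ≥ 1/2` turn this into
`(E[X | A] - E[X])⁴ ≤ 8 γ³ E[Y⁴]`. -/

open MeasureTheory ProbabilityTheory

namespace MeasureTheory

variable {α : Type*} [MeasurableSpace α] {μ : Measure α} {f : α → ℝ} {n : ℕ}

theorem pow_integral_le_of_even [IsFiniteMeasure μ] (hn : Even n) (hn0 : n ≠ 0)
    (hf : Integrable f μ) (hfn : Integrable (fun x => f x ^ n) μ) :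
    (∫ x, f x ∂μ) ^ n ≤ μ.real Set.univ ^ (n - 1) * ∫ x, f x ^ n ∂μ := by
  rcases eq_zero_or_neZero μ with rfl | _
  · simp [hn0]
  set M := μ.real Set.univ
  have hM : M ≠ 0 := by simp [M, measureReal_def, ENNReal.toReal_eq_zero_iff, NeZero.ne μ]
  have jensen : (⨍ x, f x ∂μ) ^ n ≤ ⨍ x, f x ^ n ∂μ :=
    hn.convexOn_pow.map_average_le (continuous_pow n).continuousOn isClosed_univ
      (by simp) hf hfn
  rw [average_eq, average_eq, smul_eq_mul, smul_eq_mul, mul_pow] at jensen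
  calc (∫ x, f x ∂μ) ^ n = M ^ n * (M⁻¹ ^ n * (∫ x, f x ∂μ) ^ n) := by
        rw [← mul_assoc, ← mul_pow, mul_inv_cancel₀ hM, one_pow, one_mul]
    _ ≤ M ^ n * (M⁻¹ * ∫ x, f x ^ n ∂μ) := by gcongr
    _ = M ^ (n - 1) * ∫ x, f x ^ n ∂μ := by
        rw [← mul_assoc, pow_sub₀ M hM (Nat.one_le_iff_ne_zero.2 hn0), pow_one]

theorem memLp_iff_integrable_pow_of_even (hf : AEStronglyMeasurable f μ) (hn : Even n)
    (hn0 : n ≠ 0) : MemLp f n μ ↔ Integrable (fun x => f x ^ n) μ := by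
  rw [← integrable_norm_rpow_iff hf (mod_cast hn0) (by simp)]
  simp [Real.norm_eq_abs, hn.pow_abs]

end MeasureTheory

theorem integral_cond_eq_setIntegral_div {Ω : Type*} [MeasurableSpace Ω] (μ : Measure Ω)
    (A : Set Ω) (f : Ω → ℝ) : ∫ x, f x ∂μ[|A] = (∫ x in A, f x ∂μ) / μ.real A := by
  rw [ProbabilityTheory.cond, integral_smul_measure, ENNReal.toReal_inv, smul_eq_mul,
    inv_mul_eq_div, measureReal_def]

theorem abs_le_mul_rpow_of_pow_le {x σ c : ℝ} {n : ℕ} (hn : n ≠ 0) (hσ : 0 ≤ σ)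
    (h : |x| ^ n ≤ σ ^ n * c) : |x| ≤ σ * c ^ ((1 : ℝ) / n) := by
  rcases hσ.eq_or_lt with rfl | hσ
  · simp only [zero_pow hn, zero_mul] at h
    simp [pow_eq_zero_iff hn |>.1 (le_antisymm h (by positivity))]
  have hc : 0 ≤ c :=
    nonneg_of_mul_nonneg_right ((pow_nonneg (abs_nonneg x) n).trans h) (by positivity)
  rw [← pow_le_pow_iff_left₀ (abs_nonneg x) (by positivity) hn, mul_pow, one_div,
    Real.rpow_inv_natCast_pow hc hn]
  exact h

theorem div_pow_four_le_of_split {S P γ a b K : ℝ} (hPγ : P + γ = 1) (hP : 1 / 2 ≤ P)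
    (hγ : 0 ≤ γ) (ha : S ^ 4 ≤ P ^ 3 * a) (hb : S ^ 4 ≤ γ ^ 3 * b) (hab : a + b ≤ K) :
    (S / P) ^ 4 ≤ 8 * γ ^ 3 * K := by
  have hP0 : 0 < P := by linarith
  have hS : 0 ≤ S ^ 4 := by positivity
  have hmix : S ^ 4 * (γ ^ 3 + P ^ 3) ≤ γ ^ 3 * P ^ 3 * K := by
    have ha' := mul_le_mul_of_nonneg_left ha (pow_nonneg hγ 3)
    have hb' := mul_le_mul_of_nonneg_left hb (pow_nonneg hP0.le 3)
    have hab' :=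
      mul_le_mul_of_nonneg_left hab (mul_nonneg (pow_nonneg hγ 3) (pow_nonneg hP0.le 3))
    linarith
  have hcubes : 1 / 4 ≤ γ ^ 3 + P ^ 3 := by
    obtain rfl : γ = 1 - P := by linarith
    nlinarith [sq_nonneg (P - 1 / 2)]
  have hS4 : S ^ 4 ≤ 4 * (γ ^ 3 * K) * P ^ 3 := by nlinarith
  have hK : 0 ≤ γ ^ 3 * K := by
    have := hS.trans hS4
    nlinarith [pow_pos hP0 3]
  rw [div_pow, div_le_iff₀ (by positivity)]
  calc S ^ 4 ≤ 4 * (γ ^ 3 * K) * P ^ 3 := hS4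
    _ ≤ 4 * (γ ^ 3 * K) * P ^ 3 * (2 * P) := le_mul_of_one_le_right (by positivity) (by linarith)
    _ = 8 * γ ^ 3 * K * P ^ 4 := by ring

theorem pow_four_integral_cond_le_of_integral_eq_zero {Ω : Type*} [MeasurableSpace Ω]
    {μ : Measure Ω} [IsProbabilityMeasure μ] {Y : Ω → ℝ} (hY : Integrable Y μ)
    (hY4 : Integrable (fun ω => Y ω ^ 4) μ) (hY0 : ∫ ω, Y ω ∂μ = 0) {A : Set Ω}
    (hA : MeasurableSet A) (hPA : 1 / 2 ≤ μ.real A) :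
    (∫ ω, Y ω ∂μ[|A]) ^ 4 ≤ 8 * μ.real Aᶜ ^ 3 * ∫ ω, Y ω ^ 4 ∂μ := by
  have hsplit : ∫ ω in A, Y ω ∂μ = -∫ ω in Aᶜ, Y ω ∂μ := by
    rw [eq_neg_iff_add_eq_zero, integral_add_compl hA hY, hY0]
  have jensen (s : Set Ω) :
      (∫ ω in s, Y ω ∂μ) ^ 4 ≤ μ.real s ^ 3 * ∫ ω in s, Y ω ^ 4 ∂μ := by
    simpa using pow_integral_le_of_even (μ := μ.restrict s) (by decide) (by decide)
      hY.restrict hY4.restrict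
  rw [integral_cond_eq_setIntegral_div]
  refine div_pow_four_le_of_split (probReal_add_probReal_compl hA) hPA measureReal_nonneg
    (jensen A) ?_ (integral_add_compl hA hY4).le
  rw [hsplit, Even.neg_pow ⟨2, rfl⟩]
  exact jensen Aᶜ

theorem pow_four_integral_cond_sub_integral_le {Ω : Type*} [MeasurableSpace Ω]
    {μ : Measure Ω} [IsProbabilityMeasure μ] {X : Ω → ℝ} (hX : MemLp X 4 μ) {A : Set Ω}
    (hA : MeasurableSet A) (hPA : 1 / 2 ≤ μ.real A) :
    (∫ ω, X ω ∂μ[|A] - ∫ ω, X ω ∂μ) ^ 4 ≤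
      8 * μ.real Aᶜ ^ 3 * ∫ ω, (X ω - ∫ ω, X ω ∂μ) ^ 4 ∂μ := by
  have hY : MemLp (fun ω => X ω - ∫ ω, X ω ∂μ) 4 μ := hX.sub (memLp_const _)
  have hX1 : Integrable X μ := hX.integrable (by norm_num)
  have hdev : ∫ ω, X ω ∂μ[|A] - ∫ ω, X ω ∂μ = ∫ ω, (X ω - ∫ ω, X ω ∂μ) ∂μ[|A] := by
    have hA0 : μ.real A ≠ 0 := by linarith
    simp only [integral_cond_eq_setIntegral_div]
    rw [integral_sub hX1.restrict (integrable_const _), setIntegral_const, smul_eq_mul]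
    field_simp
  rw [hdev]
  refine pow_four_integral_cond_le_of_integral_eq_zero (hY.integrable (by norm_num))
    ((memLp_iff_integrable_pow_of_even hY.1 (by decide) (by decide)).1 hY) ?_ hA hPA
  rw [integral_sub hX1 (integrable_const _), integral_const, probReal_univ, one_smul, sub_self]

theorem stmt_5_general {Ω : Type*} [MeasurableSpace Ω] (μ : Measure Ω) [IsProbabilityMeasure μ]
    (X : Ω → ℝ) (hXm : Measurable X)
    (hX4 : Integrable (fun ω => (X ω) ^ 4) μ)
    (m σ C₄ γ : ℝ) (hσ : 0 ≤ σ)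
    (hmean : ∫ ω, X ω ∂μ = m)
    (hfourth : ∫ ω, (X ω - m) ^ 4 ∂μ ≤ C₄ * σ ^ 4)
    (A : Set Ω) (hA : MeasurableSet A)
    (hPA : (μ A).toReal = 1 - γ) (hγ : 1 / 2 ≤ 1 - γ) :
    |(∫ ω, X ω ∂(μ[|A])) - m| ≤ σ * (8 * C₄ * γ ^ 3) ^ ((1 : ℝ) / 4) := by
  have hX : MemLp X 4 μ :=
    (memLp_iff_integrable_pow_of_even hXm.aestronglyMeasurable (by decide) (by decide)).2 hX4
  have hPAc : μ.real Aᶜ = γ := by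
    rw [probReal_compl_eq_one_sub hA, measureReal_def, hPA]; ring
  have key := pow_four_integral_cond_sub_integral_le hX hA (by rwa [measureReal_def, hPA])
  rw [hPAc, hmean] at key
  have hγ0 : 0 ≤ γ := hPAc ▸ measureReal_nonneg
  have hdev4 : |∫ ω, X ω ∂μ[|A] - m| ^ 4 ≤ σ ^ 4 * (8 * C₄ * γ ^ 3) :=
    calc |∫ ω, X ω ∂μ[|A] - m| ^ 4 = (∫ ω, X ω ∂μ[|A] - m) ^ 4 := Even.pow_abs ⟨2, rfl⟩ _
      _ ≤ 8 * γ ^ 3 * ∫ ω, (X ω - m) ^ 4 ∂μ := key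
      _ ≤ 8 * γ ^ 3 * (C₄ * σ ^ 4) := by gcongr
      _ = σ ^ 4 * (8 * C₄ * γ ^ 3) := by ring
  simpa using abs_le_mul_rpow_of_pow_le four_ne_zero hσ hdev4

theorem stmt_5 {Ω : Type*} [MeasurableSpace Ω] (μ : Measure Ω) [IsProbabilityMeasure μ]
    (X : Ω → ℝ) (hXm : Measurable X)
    (hX4 : Integrable (fun ω => (X ω) ^ 4) μ)
    (m σ C₄ γ : ℝ) (hσ : 0 ≤ σ)
    (hmean : ∫ ω, X ω ∂μ = m)
    (hvar : ∫ ω, (X ω - m) ^ 2 ∂μ = σ ^ 2)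
    (hfourth : ∫ ω, (X ω - m) ^ 4 ∂μ ≤ C₄ * σ ^ 4)
    (A : Set Ω) (hA : MeasurableSet A)
    (hPA : (μ A).toReal = 1 - γ) (hγ : 1 / 2 ≤ 1 - γ) :
    |(∫ ω, X ω ∂(μ[|A])) - m| ≤ σ * (8 * C₄ * γ ^ 3) ^ ((1 : ℝ) / 4) :=
  stmt_5_general μ X hXm hX4 m σ C₄ γ hσ hmean hfourth A hA hPA hγ
end

section
/- Let X be a real random variable with E[X] = μ, E[(X-μ)²] = σ², and E[(X-μ)⁴] ≤ C₄σ⁴. Let A be an event with P(A) = 1 - γ ≥ 1/2. Then (1 - √(C₄ γ)) σ² ≤ E[(X-μ)² | A] ≤ (1 + 2γ) σ². -/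
open MeasureTheory ProbabilityTheory

/-!
Write `Y = (X - m)²`. Restricting to `A` loses the mass `∫_{Aᶜ} Y`, which Cauchy–Schwarz bounds by
`√(E[Y²]) · √(P(Aᶜ)) ≤ √(C₄ σ⁴) · √γ = √(C₄ γ) σ²`, so `∫_A Y ≥ (1 - √(C₄ γ)) σ²`; also
`∫_A Y ≤ σ²`. Dividing by `P(A) = 1 - γ ∈ [1/2, 1]` gives both bounds, since
`(1 - γ)⁻¹ ≤ 1 + 2γ` for `γ ≤ 1/2`.
-/

lemma inv_one_sub_le_one_add_two_mul {γ : ℝ} (hγ₀ : 0 ≤ γ) (hγ : γ ≤ 1 / 2) :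
    (1 - γ)⁻¹ ≤ 1 + 2 * γ := by
  rw [inv_le_iff_one_le_mul₀ (by linarith)]
  nlinarith

section

variable {Ω : Type*} [MeasurableSpace Ω] {μ : Measure Ω}

lemma MeasureTheory.Integrable.pow_sub_const [IsFiniteMeasure μ] {X : Ω → ℝ}
    (hX : AEStronglyMeasurable X μ) {n : ℕ} (hn : Even n) (hn₀ : n ≠ 0)
    (h : Integrable (fun ω => X ω ^ n) μ) (c : ℝ) :
    Integrable (fun ω => (X ω - c) ^ n) μ := by
  have hXn : MemLp X n μ := by
    rw [← integrable_norm_rpow_iff hX (by exact_mod_cast hn₀) (ENNReal.natCast_ne_top n)]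
    simpa [Real.norm_eq_abs, hn.pow_abs] using h
  simpa [Real.norm_eq_abs, hn.pow_abs] using (hXn.sub (memLp_const c)).integrable_norm_pow hn₀

lemma MeasureTheory.setIntegral_le_sqrt_integral_sq_mul_sqrt_measureReal {f : Ω → ℝ}
    (hf : MemLp f 2 μ) {s : Set Ω} (hμs : μ s ≠ ⊤) :
    ∫ ω in s, f ω ∂μ ≤ √(∫ ω, f ω ^ 2 ∂μ) * √(μ.real s) := by
  have : IsFiniteMeasure (μ.restrict s) := isFiniteMeasure_restrict.2 hμs
  have hholder := integral_mul_le_Lp_mul_Lq_of_nonneg Real.HolderConjugate.two_two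
    (Filter.Eventually.of_forall fun ω => norm_nonneg (f ω))
    (Filter.Eventually.of_forall fun _ => zero_le_one)
    (by simpa using hf.norm.restrict s)
    (by simpa using memLp_const (μ := μ.restrict s) (p := 2) (1 : ℝ))
  simp only [← Real.sqrt_eq_rpow, Real.rpow_two, Real.norm_eq_abs, sq_abs, mul_one, one_pow,
    integral_const, smul_eq_mul, measureReal_restrict_apply_univ] at hholder
  calc ∫ ω in s, f ω ∂μ ≤ ∫ ω in s, |f ω| ∂μ := (le_abs_self _).trans abs_integral_le_integral_abs
    _ ≤ √(∫ ω in s, f ω ^ 2 ∂μ) * √(μ.real s) := hholder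
    _ ≤ √(∫ ω, f ω ^ 2 ∂μ) * √(μ.real s) := by
      gcongr
      exacts [.of_forall fun ω => sq_nonneg (f ω), hf.integrable_sq, Measure.restrict_le_self]

lemma MeasureTheory.setIntegral_le_sqrt_mul_sq {f : Ω → ℝ} (hf : MemLp f 2 μ) {s : Set Ω}
    (hμs : μ s ≠ ⊤) {C σ : ℝ} (hC : ∫ ω, f ω ^ 2 ∂μ ≤ C * σ ^ 4) :
    ∫ ω in s, f ω ∂μ ≤ √(C * μ.real s) * σ ^ 2 := calc
  ∫ ω in s, f ω ∂μ ≤ √(∫ ω, f ω ^ 2 ∂μ) * √(μ.real s) :=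
    setIntegral_le_sqrt_integral_sq_mul_sqrt_measureReal hf hμs
  _ ≤ √(C * σ ^ 4) * √(μ.real s) := by gcongr
  _ = √(C * μ.real s) * σ ^ 2 := by
    rw [← Real.sqrt_mul' _ measureReal_nonneg,
      show C * σ ^ 4 * μ.real s = (σ ^ 2) ^ 2 * (C * μ.real s) by ring,
      Real.sqrt_mul (by positivity), Real.sqrt_sq (by positivity), mul_comm]

lemma ProbabilityTheory.integral_cond (f : Ω → ℝ) (s : Set Ω) :
    ∫ ω, f ω ∂μ[|s] = (μ.real s)⁻¹ * ∫ ω in s, f ω ∂μ := by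
  rw [ProbabilityTheory.cond, integral_smul_measure, ENNReal.toReal_inv, smul_eq_mul,
    measureReal_def]

end

theorem stmt_6_general {Ω : Type*} [MeasurableSpace Ω] (μ : Measure Ω) [IsProbabilityMeasure μ]
    (X : Ω → ℝ) (hXm : Measurable X)
    (hX4 : Integrable (fun ω => (X ω) ^ 4) μ)
    (m σ C₄ γ : ℝ)
    (hvar : ∫ ω, (X ω - m) ^ 2 ∂μ = σ ^ 2)
    (hfourth : ∫ ω, (X ω - m) ^ 4 ∂μ ≤ C₄ * σ ^ 4)
    (A : Set Ω) (hA : MeasurableSet A)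
    (hPA : (μ A).toReal = 1 - γ) (hγ : 1 / 2 ≤ 1 - γ) :
    (1 - Real.sqrt (C₄ * γ)) * σ ^ 2 ≤ ∫ ω, (X ω - m) ^ 2 ∂(μ[|A]) ∧
      ∫ ω, (X ω - m) ^ 2 ∂(μ[|A]) ≤ (1 + 2 * γ) * σ ^ 2 := by
  set Y : Ω → ℝ := fun ω => (X ω - m) ^ 2
  have hY : MemLp Y 2 μ := by
    rw [memLp_two_iff_integrable_sq (by fun_prop)]
    simpa only [Y, ← pow_mul] using hX4.pow_sub_const hXm.aestronglyMeasurable (by decide)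
      (by decide) m
  have hPA' : μ.real A = 1 - γ := hPA
  have hγ₀ : 0 ≤ γ := by linarith [hPA' ▸ measureReal_le_one (μ := μ) (s := A)]
  have hsplit : ∫ ω in A, Y ω ∂μ + ∫ ω in Aᶜ, Y ω ∂μ = σ ^ 2 :=
    (integral_add_compl hA (hY.integrable one_le_two)).trans hvar
  have htail : ∫ ω in Aᶜ, Y ω ∂μ ≤ √(C₄ * γ) * σ ^ 2 := by
    rw [← sub_sub_cancel 1 γ, ← hPA', ← probReal_compl_eq_one_sub hA]
    exact setIntegral_le_sqrt_mul_sq hY (measure_ne_top μ _) (by simpa only [Y, ← pow_mul])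
  have hA_nonneg : 0 ≤ ∫ ω in A, Y ω ∂μ := setIntegral_nonneg hA fun ω _ => sq_nonneg _
  have hAc_nonneg : 0 ≤ ∫ ω in Aᶜ, Y ω ∂μ := setIntegral_nonneg hA.compl fun ω _ => sq_nonneg _
  have hinv : 1 ≤ (1 - γ)⁻¹ := (one_le_inv₀ (by linarith)).2 (by linarith)
  rw [integral_cond, hPA']
  constructor
  · calc (1 - √(C₄ * γ)) * σ ^ 2 ≤ ∫ ω in A, Y ω ∂μ := by linarith
      _ ≤ (1 - γ)⁻¹ * ∫ ω in A, Y ω ∂μ := le_mul_of_one_le_left hA_nonneg hinv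
  · calc (1 - γ)⁻¹ * ∫ ω in A, Y ω ∂μ ≤ (1 - γ)⁻¹ * σ ^ 2 := by gcongr; linarith
      _ ≤ (1 + 2 * γ) * σ ^ 2 := by
        gcongr
        exact inv_one_sub_le_one_add_two_mul hγ₀ (by linarith)

theorem stmt_6 {Ω : Type*} [MeasurableSpace Ω] (μ : Measure Ω) [IsProbabilityMeasure μ]
    (X : Ω → ℝ) (hXm : Measurable X)
    (hX4 : Integrable (fun ω => (X ω) ^ 4) μ)
    (m σ C₄ γ : ℝ) (hσ : 0 ≤ σ)
    (hmean : ∫ ω, X ω ∂μ = m)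
    (hvar : ∫ ω, (X ω - m) ^ 2 ∂μ = σ ^ 2)
    (hfourth : ∫ ω, (X ω - m) ^ 4 ∂μ ≤ C₄ * σ ^ 4)
    (A : Set Ω) (hA : MeasurableSet A)
    (hPA : (μ A).toReal = 1 - γ) (hγ : 1 / 2 ≤ 1 - γ) :
    (1 - Real.sqrt (C₄ * γ)) * σ ^ 2 ≤ ∫ ω, (X ω - m) ^ 2 ∂(μ[|A]) ∧
      ∫ ω, (X ω - m) ^ 2 ∂(μ[|A]) ≤ (1 + 2 * γ) * σ ^ 2 :=
  stmt_6_general μ X hXm hX4 m σ C₄ γ hvar hfourth A hA hPA hγ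
end
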